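/- arXiv:2604.03444 — 2 statements merged into one kernel-verified Lean document; each statement's English description precedes it below -/
import Mathlib

section
/- Fix α > 0 and a < b, and set L_n = a + ((b-a)/(α·ζ(α+1)))·n^{-α}, L̃_n = a + ((b-a)/ζ(α+1))·∑_{k=n+1}^∞ k^{-(α+1)}. Then the relative error (L_n - L̃_n)/L̃_n is at most ((n+1)^α - n^α)/n^α, and in particular tends to 0 as n → ∞. -/
/-!
Comparing the sum `∑_{k>n} k^{-(α+1)}` with the telescoping sum of `k^{-α}/α` (mean value theorem
on each `[k, k+1]`) traps `α · tailSum α n` between `(n+1)^{-α}` and `n^{-α}`. Writing both losses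
as `a + D u` and `a + D t` with `(n+1)^{-α} ≤ t ≤ u = n^{-α}`, the relative error is at most
`n^{-α} / (n+1)^{-α} - 1 = ((n+1)^α - n^α) / n^α`, which tends to `0` because `n/(n+1) → 1`.
-/

open Filter Real Topology

/-- ζ(s) = ∑_{k=1}^∞ k^{-s}, as a real series. -/
noncomputable def zetaR (s : ℝ) : ℝ := ∑' k : ℕ, ((k : ℝ) + 1) ^ (-s)

/-- Tail sum ∑_{k=n+1}^∞ k^{-(α+1)}. -/
noncomputable def tailSum (α : ℝ) (n : ℕ) : ℝ := ∑' k : ℕ, ((n : ℝ) + 1 + k) ^ (-(α + 1))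

/-- Power-law approximation L_n = a + ((b-a)/(α·ζ(α+1)))·n^{-α}. -/
noncomputable def Lpow (α a b : ℝ) (n : ℕ) : ℝ :=
  a + (b - a) / (α * zetaR (α + 1)) * (n : ℝ) ^ (-α)

/-- Exact quantization-model loss L̃_n = a + ((b-a)/ζ(α+1))·∑_{k=n+1}^∞ k^{-(α+1)}. -/
noncomputable def Ltilde (α a b : ℝ) (n : ℕ) : ℝ :=
  a + (b - a) / zetaR (α + 1) * tailSum α n

theorem hasSum_sub_succ_of_antitone {g : ℕ → ℝ} (hg : Antitone g)
    (h0 : Tendsto g atTop (𝓝 0)) : HasSum (fun k => g k - g (k + 1)) (g 0) := by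
  rw [hasSum_iff_tendsto_nat_of_nonneg fun k => sub_nonneg.2 (hg k.le_succ)]
  simp_rw [Finset.sum_range_sub']
  simpa using (tendsto_const_nhds (x := g 0)).sub h0

section RpowDifferences

variable {α x : ℝ}

theorem exists_rpow_neg_sub_rpow_neg_eq (hx : 0 < x) :
    ∃ ξ ∈ Set.Ioo x (x + 1), x ^ (-α) - (x + 1) ^ (-α) = α * ξ ^ (-(α + 1)) := by
  have hderiv : ∀ y ∈ Set.Ioo x (x + 1),
      HasDerivAt (fun y : ℝ => y ^ (-α)) (-α * y ^ (-α - 1)) y := fun y hy =>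
    hasDerivAt_rpow_const (Or.inl (hx.trans hy.1).ne')
  have hcont : ContinuousOn (fun y : ℝ => y ^ (-α)) (Set.Icc x (x + 1)) :=
    continuousOn_id.rpow_const fun y hy => Or.inl (hx.trans_le hy.1).ne'
  obtain ⟨ξ, hξ, hslope⟩ := exists_hasDerivAt_eq_slope _ _ (lt_add_one x) hcont hderiv
  refine ⟨ξ, hξ, ?_⟩
  rw [add_sub_cancel_left, div_one] at hslope
  rw [neg_add', ← neg_sub, ← hslope]
  ring

theorem mul_rpow_neg_le_rpow_neg_sub_rpow_neg (hα : 0 ≤ α) (hx : 0 < x) :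
    α * (x + 1) ^ (-(α + 1)) ≤ x ^ (-α) - (x + 1) ^ (-α) := by
  obtain ⟨ξ, hξ, heq⟩ := exists_rpow_neg_sub_rpow_neg_eq (α := α) hx
  rw [heq]
  gcongr ?_ * ?_
  exact rpow_le_rpow_of_nonpos (hx.trans hξ.1) hξ.2.le (by linarith)

theorem rpow_neg_sub_rpow_neg_le_mul_rpow_neg (hα : 0 ≤ α) (hx : 0 < x) :
    x ^ (-α) - (x + 1) ^ (-α) ≤ α * x ^ (-(α + 1)) := by
  obtain ⟨ξ, hξ, heq⟩ := exists_rpow_neg_sub_rpow_neg_eq (α := α) hx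
  rw [heq]
  gcongr ?_ * ?_
  exact rpow_le_rpow_of_nonpos hx hξ.1.le (by linarith)

theorem hasSum_rpow_neg_sub_rpow_neg (hα : 0 < α) (hx : 0 < x) :
    HasSum (fun k : ℕ => (x + k) ^ (-α) - (x + k + 1) ^ (-α)) (x ^ (-α)) := by
  have hanti : Antitone fun k : ℕ => (x + k) ^ (-α) := fun i j hij =>
    rpow_le_rpow_of_nonpos (by positivity) (by gcongr) (by linarith)
  have hlim : Tendsto (fun k : ℕ => (x + k) ^ (-α)) atTop (𝓝 0) :=
    (tendsto_rpow_neg_atTop hα).comp (tendsto_atTop_add_const_left _ x tendsto_natCast_atTop_atTop)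
  simpa [add_assoc] using hasSum_sub_succ_of_antitone hanti hlim

end RpowDifferences

section TailSum

variable {α : ℝ}

theorem summable_tailSum (hα : 0 < α) (n : ℕ) :
    Summable fun k : ℕ => ((n : ℝ) + 1 + k) ^ (-(α + 1)) := by
  have := (summable_nat_add_iff (n + 1)).mpr
    (Real.summable_nat_rpow.mpr (by linarith : -(α + 1) < -1))
  simpa [add_comm, add_left_comm, add_assoc] using this

theorem hasSum_mul_tailSum (hα : 0 < α) (n : ℕ) :
    HasSum (fun k : ℕ => α * ((n : ℝ) + 1 + k) ^ (-(α + 1))) (α * tailSum α n) :=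
  (summable_tailSum hα n).hasSum.mul_left α

theorem rpow_neg_le_mul_tailSum (hα : 0 < α) (n : ℕ) :
    ((n : ℝ) + 1) ^ (-α) ≤ α * tailSum α n := by
  refine hasSum_le (fun k => ?_) (hasSum_rpow_neg_sub_rpow_neg hα (by positivity))
    (hasSum_mul_tailSum hα n)
  exact rpow_neg_sub_rpow_neg_le_mul_rpow_neg hα.le (by positivity)

theorem mul_tailSum_le_rpow_neg (hα : 0 < α) {n : ℕ} (hn : 0 < n) :
    α * tailSum α n ≤ (n : ℝ) ^ (-α) := by
  refine hasSum_le (fun k => ?_) (hasSum_mul_tailSum hα n)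
    (hasSum_rpow_neg_sub_rpow_neg hα (by exact_mod_cast hn))
  rw [add_right_comm (n : ℝ) 1 k]
  exact mul_rpow_neg_le_rpow_neg_sub_rpow_neg (x := n + k) hα.le (by positivity)

theorem zetaR_add_one_pos (hα : 0 < α) : 0 < zetaR (α + 1) := by
  have hζ : zetaR (α + 1) = tailSum α 0 := by simp [zetaR, tailSum, add_comm]
  have := rpow_neg_le_mul_tailSum hα 0
  rw [hζ]
  simp only [Nat.cast_zero, zero_add, one_rpow] at this
  exact pos_of_mul_pos_right (one_pos.trans_le this) hα.le

end TailSum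

noncomputable def relErr (L L' : ℝ) : ℝ := (L - L') / L'

section RelErr

variable {a D t u v : ℝ}

theorem relErr_add_mul_nonneg (ha : 0 ≤ a) (hD : 0 ≤ D) (ht : 0 ≤ t) (htu : t ≤ u) :
    0 ≤ relErr (a + D * u) (a + D * t) := by
  unfold relErr
  apply div_nonneg <;> nlinarith

theorem relErr_add_mul_le (ha : 0 < a) (hD : 0 ≤ D) (hv : 0 < v) (hvu : v ≤ u) (hvt : v ≤ t) :
    relErr (a + D * u) (a + D * t) ≤ u / v - 1 := by
  have hpos : 0 < a + D * t := by nlinarith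
  rw [relErr, div_sub_one hv.ne', div_le_div_iff₀ hpos hv]
  nlinarith [mul_le_mul_of_nonneg_left hvt (mul_nonneg hD (hv.le.trans hvu))]

end RelErr

theorem rpow_neg_div_rpow_neg_sub_one {α x y : ℝ} (hx : 0 < x) (hy : 0 < y) :
    x ^ (-α) / y ^ (-α) - 1 = (y ^ α - x ^ α) / x ^ α := by
  have hxα : x ^ α ≠ 0 := (rpow_pos_of_pos hx α).ne'
  have hyα : y ^ α ≠ 0 := (rpow_pos_of_pos hy α).ne'
  rw [rpow_neg hx.le, rpow_neg hy.le]
  field_simp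

theorem tendsto_natCast_rpow_neg_div_succ_rpow_neg (α : ℝ) :
    Tendsto (fun n : ℕ => (n : ℝ) ^ (-α) / ((n : ℝ) + 1) ^ (-α)) atTop (𝓝 1) := by
  have h := (tendsto_natCast_div_add_atTop (1 : ℝ)).rpow_const (p := -α) (Or.inl one_ne_zero)
  rw [one_rpow] at h
  exact h.congr fun n => div_rpow n.cast_nonneg (by positivity) _

theorem Ltilde_eq {α : ℝ} (hα : α ≠ 0) (a b : ℝ) (n : ℕ) :
    Ltilde α a b n = a + (b - a) / (α * zetaR (α + 1)) * (α * tailSum α n) := by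
  rw [Ltilde, mul_comm α, ← div_div, ← mul_assoc, div_mul_cancel₀ _ hα]

/-- The relative error (L_n - L̃_n)/L̃_n is at most ((n+1)^α - n^α)/n^α, and in
particular tends to 0 as n → ∞. -/
theorem stmt7 (α a b : ℝ) (hα : 0 < α) (ha : 0 < a) (hab : a < b) :
    (∀ n : ℕ, 1 ≤ n →
      (Lpow α a b n - Ltilde α a b n) / Ltilde α a b n ≤
        (((n : ℝ) + 1) ^ α - (n : ℝ) ^ α) / (n : ℝ) ^ α) ∧
    Filter.Tendsto (fun n : ℕ => (Lpow α a b n - Ltilde α a b n) / Ltilde α a b n)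
      Filter.atTop (nhds 0) := by
  have hD : 0 ≤ (b - a) / (α * zetaR (α + 1)) :=
    div_nonneg (sub_nonneg.2 hab.le) (mul_pos hα (zetaR_add_one_pos hα)).le
  have hlower (n : ℕ) (hn : 0 < n) : 0 ≤ relErr (Lpow α a b n) (Ltilde α a b n) := by
    rw [Ltilde_eq hα.ne']
    exact relErr_add_mul_nonneg ha.le hD ((by positivity : (0 : ℝ) ≤ _).trans
      (rpow_neg_le_mul_tailSum hα n)) (mul_tailSum_le_rpow_neg hα hn)
  have hupper (n : ℕ) (hn : 0 < n) : relErr (Lpow α a b n) (Ltilde α a b n) ≤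
      (n : ℝ) ^ (-α) / ((n : ℝ) + 1) ^ (-α) - 1 := by
    rw [Ltilde_eq hα.ne']
    exact relErr_add_mul_le ha hD (by positivity)
      (rpow_le_rpow_of_nonpos (by positivity) (by linarith) (by linarith))
      (rpow_neg_le_mul_tailSum hα n)
  refine ⟨fun n hn => ?_, ?_⟩
  · rw [← rpow_neg_div_rpow_neg_sub_one (by positivity) (by positivity)]
    exact hupper n hn
  · have hbound := (tendsto_natCast_rpow_neg_div_succ_rpow_neg α).sub_const 1
    rw [sub_self] at hbound
    exact tendsto_of_tendsto_of_tendsto_of_le_of_le' tendsto_const_nhds hbound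
      ((eventually_gt_atTop 0).mono hlower) ((eventually_gt_atTop 0).mono hupper)
end

section
/- Fix A, B, α, β > 0 and a compute constraint C = 6·N·D. The allocation minimizing A/N^α + B/D^β subject to 6ND = C satisfies the first-order condition α·A/N^α = β·B/D^β, and the compute-optimal model size is N* = (C/(6G))^{β/(α+β)} where G = (βB/(αA))^{1/β}. -/
/-!
Put `u = A / N ^ α` and `v = B / D ^ β`. Under the constraint `N * D = C / 6` the quantity
`u ^ β * v ^ α = A ^ β * B ^ α / (N * D) ^ (α * β)` is fixed. Weighted AM-GM with weights
`β / (α + β)` and `α / (α + β)`, applied to `(α + β) / β * u` and `(α + β) / α * v`, bounds `u + v`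
below by a function of `u ^ β * v ^ α` alone, with equality when the two points coincide, i.e. when
`α * u = β * v`. The allocation `N*` satisfies this first-order condition because
`(C / (6 * N*)) ^ β = G ^ β * N* ^ α`.
-/

open Real

namespace Chinchilla

variable {α β : ℝ}

lemma rpow_mul_rpow_rpow_inv {x y : ℝ} (hx : 0 ≤ x) (hy : 0 ≤ y) :
    (x ^ β * y ^ α) ^ (α + β)⁻¹ = x ^ (β / (α + β)) * y ^ (α / (α + β)) := by
  rw [mul_rpow (rpow_nonneg hx β) (rpow_nonneg hy α), ← rpow_mul hx, ← rpow_mul hy,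
    div_eq_mul_inv, div_eq_mul_inv]

theorem add_le_add_of_mul_eq_of_rpow_mul_rpow_eq (hα : 0 < α) (hβ : 0 < β) {u v u' v' : ℝ}
    (hu : 0 ≤ u) (hv : 0 ≤ v) (hu' : 0 ≤ u') (hv' : 0 ≤ v') (hfoc : α * u = β * v)
    (hlevel : u ^ β * v ^ α = u' ^ β * v' ^ α) : u + v ≤ u' + v' := by
  have hs : 0 < α + β := add_pos hα hβ
  set w₁ := β / (α + β)
  set w₂ := α / (α + β)
  have hw : w₁ + w₂ = 1 := by simp only [w₁, w₂]; field_simp; ring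
  set P : ℝ → ℝ → ℝ := fun x y ↦ ((α + β) / β * x) ^ w₁ * ((α + β) / α * y) ^ w₂
  have hP : ∀ x y, 0 ≤ x → 0 ≤ y →
      P x y = ((α + β) / β) ^ w₁ * ((α + β) / α) ^ w₂ * (x ^ β * y ^ α) ^ (α + β)⁻¹ := by
    intro x y hx hy
    rw [rpow_mul_rpow_rpow_inv hx hy]
    simp only [P, mul_rpow (div_pos hs hβ).le hx, mul_rpow (div_pos hs hα).le hy]
    ring
  have hsum : ∀ x y, w₁ * ((α + β) / β * x) + w₂ * ((α + β) / α * y) = x + y := by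
    intro x y
    simp only [w₁, w₂]
    field_simp
  -- At the optimum both points of the AM-GM coincide, so the mean inequality is an equality.
  set p := (α + β) / β * u
  have hp : (α + β) / α * v = p := by
    simp only [p]
    field_simp
    exact hfoc.symm
  calc u + v = p := by rw [← hsum u v, hp, ← add_mul, hw, one_mul]
    _ = P u v := by
      simp only [P]
      rw [hp, ← rpow_add' (by positivity) (by rw [hw]; exact one_ne_zero), hw, rpow_one]
    _ = P u' v' := by rw [hP u v hu hv, hP u' v' hu' hv', hlevel]
    _ ≤ u' + v' := by
      rw [← hsum u' v']
      exact geom_mean_le_arith_mean2_weighted (by positivity) (by positivity) (by positivity)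
        (by positivity) hw

lemma div_rpow_mul_div_rpow_rpow {A B N D : ℝ} (hA : 0 ≤ A) (hB : 0 ≤ B) (hN : 0 < N)
    (hD : 0 < D) :
    (A / N ^ α) ^ β * (B / D ^ β) ^ α = A ^ β * B ^ α / (N * D) ^ (α * β) := by
  rw [div_rpow hA (rpow_nonneg hN.le α), div_rpow hB (rpow_nonneg hD.le β), ← rpow_mul hN.le,
    ← rpow_mul hD.le, mul_rpow hN.le hD.le, mul_comm β α]
  ring

lemma div_rpow_rpow_eq_mul_rpow_rpow (hs : α + β ≠ 0) {K G : ℝ} (hK : 0 < K) (hG : 0 < G) :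
    (K / (K / G) ^ (β / (α + β))) ^ β = G ^ β * ((K / G) ^ (β / (α + β))) ^ α := by
  have hx : 0 < K / G := div_pos hK hG
  -- `K / x ^ t = G * x ^ (1 - t)` for `x = K / G`, and `(1 - t) * β = t * α` for `t = β / (α + β)`.
  have hsplit : K / (K / G) ^ (β / (α + β)) = G * (K / G) ^ (α / (α + β)) := by
    rw [div_eq_iff (rpow_pos_of_pos hx _).ne', mul_assoc, ← rpow_add hx,
      show α / (α + β) + β / (α + β) = 1 by field_simp, rpow_one]
    field_simp
  rw [hsplit, mul_rpow hG.le (rpow_nonneg hx.le _), ← rpow_mul hx.le, ← rpow_mul hx.le]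
  congr 2
  ring

end Chinchilla

open Chinchilla in
/-- Compute-optimal allocation for the Chinchilla law under the constraint 6ND = C:
with G = (βB/(αA))^{1/β} and N* = (C/(6G))^{β/(α+β)}, D* = C/(6N*), the pair
(N*, D*) satisfies the constraint, the first-order condition αA/N^α = βB/D^β, and
minimizes A/N^α + B/D^β among all positive allocations with 6ND = C. -/
theorem stmt15 (A B α β C : ℝ) (hA : 0 < A) (hB : 0 < B) (hα : 0 < α)
    (hβ : 0 < β) (hC : 0 < C) :
    let G := (β * B / (α * A)) ^ (1 / β)
    let Nstar := (C / (6 * G)) ^ (β / (α + β))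
    let Dstar := C / (6 * Nstar)
    0 < Nstar ∧ 0 < Dstar ∧ 6 * Nstar * Dstar = C ∧
      α * A / Nstar ^ α = β * B / Dstar ^ β ∧
      ∀ N D : ℝ, 0 < N → 0 < D → 6 * N * D = C →
        A / Nstar ^ α + B / Dstar ^ β ≤ A / N ^ α + B / D ^ β := by
  intro G Nstar Dstar
  have hG : 0 < G := by positivity
  have hGβ : G ^ β = β * B / (α * A) := by
    rw [← rpow_mul (by positivity), one_div_mul_cancel hβ.ne', rpow_one]
  have hN : 0 < Nstar := by positivity
  have hD : 0 < Dstar := by positivity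
  have hDβ : Dstar ^ β = G ^ β * Nstar ^ α := by
    simpa only [Dstar, Nstar, div_div, mul_div_assoc] using
      div_rpow_rpow_eq_mul_rpow_rpow (by positivity) (by positivity : 0 < C / 6) hG
  have hfoc : α * A / Nstar ^ α = β * B / Dstar ^ β := by
    rw [hDβ, hGβ]
    field_simp
  refine ⟨hN, hD, by simp only [Dstar]; field_simp, hfoc, fun N D hN' hD' hND ↦ ?_⟩
  have hprod : Nstar * Dstar = N * D := by simp only [Dstar]; field_simp; linarith
  refine add_le_add_of_mul_eq_of_rpow_mul_rpow_eq hα hβ (by positivity) (by positivity)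
    (by positivity) (by positivity) (by simpa only [mul_div_assoc] using hfoc) ?_
  rw [div_rpow_mul_div_rpow_rpow hA.le hB.le hN hD,
    div_rpow_mul_div_rpow_rpow hA.le hB.le hN' hD', hprod]
end
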